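/- Key gradient inequality for generalized ReLU GLM: under the idealized GLM setup, if ê(w) ≥ ε and ‖v - w*‖ ≤ εa/(2b³W), then ⟨G(w), w - v⟩ ≥ (a/b)·ε·(2 - ‖w - w*‖/W) ≥ 0. -/

import Mathlib

open RealInnerProductSpace

/-!
For each sample put `s = ⟪w, x⟫`, `t = ⟪w*, x⟫` and split `⟪x, w - v⟫ = (s - t) + ⟪x, w* - v⟫`.
Since `φ` is monotone and `b`-Lipschitz, `(φ s - φ t)² ≤ b (φ s - φ t)(s - t)`, and `g ≥ a` turns the
first part of the gradient term into at least `(a/b)(φ s - φ t)²`, whose average is `ê(w) ≥ ε`.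
The second part is at most `b · b‖w - w*‖ · ‖v - w*‖` in absolute value, and the choice of the radius
of `v` around `w*` makes its average cost at most `(a/b) ε ‖w - w*‖ / W`.
-/

noncomputable def genReLU (a b t : ℝ) : ℝ := if t ≤ 0 then a * t else b * t

theorem genReLU_monotone {a b : ℝ} (ha : 0 ≤ a) (hab : a ≤ b) : Monotone (genReLU a b) := by
  intro s t hst
  unfold genReLU
  split_ifs <;> nlinarith

theorem abs_genReLU_sub_le {a b : ℝ} (ha : 0 ≤ a) (hab : a ≤ b) (s t : ℝ) :
    |genReLU a b s - genReLU a b t| ≤ b * |s - t| := by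
  rw [abs_le]
  unfold genReLU
  constructor <;> split_ifs <;> nlinarith [le_abs_self (s - t), neg_abs_le (s - t)]

theorem Monotone.mul_sub_sub_nonneg {f : ℝ → ℝ} (hf : Monotone f) (s t : ℝ) :
    0 ≤ (f s - f t) * (s - t) := by
  rcases le_total t s with h | h
  · exact mul_nonneg (sub_nonneg.2 (hf h)) (sub_nonneg.2 h)
  · exact mul_nonneg_of_nonpos_of_nonpos (sub_nonpos.2 (hf h)) (sub_nonpos.2 h)

theorem Monotone.sq_sub_le_mul_sub_mul_sub {f : ℝ → ℝ} {K : ℝ} (hf : Monotone f)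
    (hK : ∀ s t, |f s - f t| ≤ K * |s - t|) (s t : ℝ) :
    (f s - f t) ^ 2 ≤ K * ((f s - f t) * (s - t)) :=
  calc (f s - f t) ^ 2 = |f s - f t| * |f s - f t| := by rw [abs_mul_abs_self, sq]
    _ ≤ |f s - f t| * (K * |s - t|) := mul_le_mul_of_nonneg_left (hK s t) (abs_nonneg _)
    _ = K * |(f s - f t) * (s - t)| := by rw [abs_mul]; ring
    _ = K * ((f s - f t) * (s - t)) := by rw [abs_of_nonneg (hf.mul_sub_sub_nonneg s t)]

theorem abs_real_inner_le_norm_of_norm_le_one {E : Type*} [NormedAddCommGroup E]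
    [InnerProductSpace ℝ E] (u : E) {x : E} (hx : ‖x‖ ≤ 1) : |⟪u, x⟫| ≤ ‖u‖ :=
  (abs_real_inner_le_norm u x).trans (mul_le_of_le_one_right (norm_nonneg u) hx)

section GradientTerm

variable {E : Type*} [NormedAddCommGroup E] [InnerProductSpace ℝ E]
  {φ g : ℝ → ℝ} {a b : ℝ} (ha : 0 < a) (hφ : Monotone φ) (hφb : ∀ s t, |φ s - φ t| ≤ b * |s - t|)
  (hg : ∀ s, g s ∈ Set.Icc a b)
include ha hφ hφb hg

theorem div_mul_sq_sub_le_mul_sub_mul_sub (s t : ℝ) :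
    a / b * (φ s - φ t) ^ 2 ≤ g s * (φ s - φ t) * (s - t) := by
  have hb : 0 < b := ha.trans_le ((hg s).1.trans (hg s).2)
  have hprod := hφ.mul_sub_sub_nonneg s t
  calc a / b * (φ s - φ t) ^ 2 ≤ a / b * (b * ((φ s - φ t) * (s - t))) := by
        gcongr; exact hφ.sq_sub_le_mul_sub_mul_sub hφb s t
    _ = a * ((φ s - φ t) * (s - t)) := by field_simp
    _ ≤ g s * ((φ s - φ t) * (s - t)) := mul_le_mul_of_nonneg_right (hg s).1 hprod
    _ = g s * (φ s - φ t) * (s - t) := by ring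

theorem le_gradient_term (x w wstar v : E) (hx : ‖x‖ ≤ 1) :
    a / b * (φ ⟪w, x⟫ - φ ⟪wstar, x⟫) ^ 2 - b ^ 2 * ‖w - wstar‖ * ‖v - wstar‖
      ≤ g ⟪w, x⟫ * (φ ⟪w, x⟫ - φ ⟪wstar, x⟫) * ⟪x, w - v⟫ := by
  set s := ⟪w, x⟫
  set t := ⟪wstar, x⟫
  have hb : 0 ≤ b := ha.le.trans ((hg s).1.trans (hg s).2)
  have hsplit : ⟪x, w - v⟫ = (s - t) + ⟪x, wstar - v⟫ := by
    rw [← sub_add_sub_cancel w wstar v, inner_add_right, inner_sub_right,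
      real_inner_comm w x, real_inner_comm wstar x]
  have hst : |s - t| ≤ ‖w - wstar‖ := by
    rw [← inner_sub_left]; exact abs_real_inner_le_norm_of_norm_le_one _ hx
  have hperturb : |g s * (φ s - φ t) * ⟪x, wstar - v⟫| ≤ b * (b * ‖w - wstar‖) * ‖v - wstar‖ := by
    rw [abs_mul, abs_mul, norm_sub_rev v, real_inner_comm]
    gcongr
    · exact abs_le.2 ⟨by linarith [(hg s).1, (hg s).2], (hg s).2⟩
    · exact (hφb s t).trans (by gcongr)
    · exact abs_real_inner_le_norm_of_norm_le_one _ hx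
  rw [hsplit, mul_add]
  linarith [div_mul_sq_sub_le_mul_sub_mul_sub ha hφ hφb hg s t,
    neg_abs_le (g s * (φ s - φ t) * ⟪x, wstar - v⟫)]

end GradientTerm

theorem glm_genReLU_gradient_inequality_general (d m : ℕ) (hm : 0 < m) (a b W ε : ℝ)
    (ha : 0 < a) (hab : a ≤ b) (hε : 0 < ε)
    (φ g : ℝ → ℝ)
    (hφ : ∀ t, φ t = if t ≤ 0 then a * t else b * t)
    (hg : ∀ t, g t = if t < 0 then a else b)
    (x : Fin m → EuclideanSpace ℝ (Fin d)) (hx : ∀ i, ‖x i‖ ≤ 1)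
    (wstar w : EuclideanSpace ℝ (Fin d)) (hwstar : ‖wstar‖ ≤ W) (hw : ‖w‖ ≤ W)
    (y : Fin m → ℝ) (hy : ∀ i, y i = φ ⟪wstar, x i⟫)
    (herr : (1 / (m : ℝ)) * ∑ i, (y i - φ ⟪w, x i⟫) ^ 2 ≥ ε)
    (v : EuclideanSpace ℝ (Fin d)) (hv : ‖v - wstar‖ ≤ ε * a / (2 * b ^ 3 * W)) :
    ⟪(2 / (m : ℝ)) • ∑ i, (g ⟪w, x i⟫ * (φ ⟪w, x i⟫ - y i)) • x i, w - v⟫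
      ≥ (a / b) * ε * (2 - ‖w - wstar‖ / W) ∧
    (a / b) * ε * (2 - ‖w - wstar‖ / W) ≥ 0 := by
  have hb : 0 < b := ha.trans_le hab
  have hmR : (m : ℝ) ≠ 0 := by positivity
  have hdist : ‖w - wstar‖ / W ≤ 2 :=
    div_le_of_le_mul₀ ((norm_nonneg _).trans hw) zero_le_two
      ((norm_sub_le w wstar).trans (by linarith))
  refine ⟨?_, mul_nonneg (by positivity) (sub_nonneg.2 hdist)⟩
  obtain rfl : φ = genReLU a b := funext hφ
  have hg_mem : ∀ s, g s ∈ Set.Icc a b := fun s => by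
    rw [hg]; split_ifs <;> simp [hab]
  have hterm i := le_gradient_term ha (genReLU_monotone ha.le hab) (abs_genReLU_sub_le ha.le hab)
    hg_mem (x i) w wstar v (hx i)
  simp only [hy, real_inner_smul_left, sum_inner] at herr ⊢
  calc a / b * ε * (2 - ‖w - wstar‖ / W)
      = 2 * (a / b * ε) - 2 * (b ^ 2 * ‖w - wstar‖ * (ε * a / (2 * b ^ 3 * W))) := by
        field_simp
    _ ≤ 2 * (a / b * (1 / m * ∑ i, (genReLU a b ⟪w, x i⟫ - genReLU a b ⟪wstar, x i⟫) ^ 2))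
        - 2 * (b ^ 2 * ‖w - wstar‖ * ‖v - wstar‖) := by
        gcongr
        simpa only [sub_sq_comm] using herr
    _ = 2 / m * ∑ i, (a / b * (genReLU a b ⟪w, x i⟫ - genReLU a b ⟪wstar, x i⟫) ^ 2
        - b ^ 2 * ‖w - wstar‖ * ‖v - wstar‖) := by
        rw [Finset.sum_sub_distrib, Finset.sum_const, Finset.card_univ, Fintype.card_fin,
          nsmul_eq_mul, ← Finset.mul_sum]
        field_simp
    _ ≤ 2 / m * ∑ i, g ⟪w, x i⟫ * (genReLU a b ⟪w, x i⟫ - genReLU a b ⟪wstar, x i⟫)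
        * ⟪x i, w - v⟫ := by
        gcongr with i
        exact hterm i

theorem glm_genReLU_gradient_inequality (d m : ℕ) (hm : 0 < m) (a b W ε : ℝ)
    (ha : 0 < a) (hab : a ≤ b) (hW : 0 < W) (hε : 0 < ε)
    (φ g : ℝ → ℝ)
    (hφ : ∀ t, φ t = if t ≤ 0 then a * t else b * t)
    (hg : ∀ t, g t = if t < 0 then a else b)
    (x : Fin m → EuclideanSpace ℝ (Fin d)) (hx : ∀ i, ‖x i‖ ≤ 1)
    (wstar w : EuclideanSpace ℝ (Fin d)) (hwstar : ‖wstar‖ ≤ W) (hw : ‖w‖ ≤ W)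
    (y : Fin m → ℝ) (hy : ∀ i, y i = φ ⟪wstar, x i⟫)
    (herr : (1 / (m : ℝ)) * ∑ i, (y i - φ ⟪w, x i⟫) ^ 2 ≥ ε)
    (v : EuclideanSpace ℝ (Fin d)) (hv : ‖v - wstar‖ ≤ ε * a / (2 * b ^ 3 * W)) :
    ⟪(2 / (m : ℝ)) • ∑ i, (g ⟪w, x i⟫ * (φ ⟪w, x i⟫ - y i)) • x i, w - v⟫
      ≥ (a / b) * ε * (2 - ‖w - wstar‖ / W) ∧
    (a / b) * ε * (2 - ‖w - wstar‖ / W) ≥ 0 :=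
  glm_genReLU_gradient_inequality_general d m hm a b W ε ha hab hε φ g hφ hg x hx wstar w hwstar hw
    y hy herr v hv
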